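/- EDPD with strongly convex dual: if g is μ_g-strongly convex (μ_g > 0, μ_f = 0), with α_{t+1} = (t+1)/(t+2), τ = 2.5/μ_g, τ_t = τ/(t+1), η_t = (t+1)/(τ‖A‖²), y_0 = y_1, the weighted averages x̃_{k+1} = ∑_{t=1}^k (t+1)x_{t+1}/∑_{t=1}^k(t+1) and ỹ_{k+1} analogously satisfy L(x̃_{k+1}, y) − L(x, ỹ_{k+1}) ≤ (2/(k(k+3)))(‖A‖²τ‖x − x_1‖²/2 + 2‖y − y_1‖²/τ) for all (x,y). -/

import Mathlib

/-!
Both updates are proximal steps: the primal one on `L(·, ŷ_t)`, the dual one on the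
`μ_g`-strongly convex `g`. The three-point inequality of a strongly convex proximal step bounds
the gap `L(x_{t+1}, v) - L(u, y_{t+1})` by differences of squared distances plus the cross term
`⟪A x_{t+1} - A u, y_{t+1} - ŷ_t⟫`. After weighting by `t + 1`, the extrapolation `ŷ_t` makes the
cross terms telescope up to an error that Young's inequality absorbs into the primal distances,
and `τ μ_g = 5/2` lets the dual weight grow from `(t + 1)²` to `(t + 2)²`. Hence
`(t + 1) · gap_t ≤ Φ_t - Φ_{t+1}` for a nonnegative potential `Φ`; summing and applying Jensen to
the convex-concave `L` gives the bound, as `∑_{t=1}^k (t + 1) = k (k + 3) / 2`.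
-/

open scoped RealInnerProductSpace
open Set Filter Topology

section Prox

variable {X : Type*} [NormedAddCommGroup X] [InnerProductSpace ℝ X]

theorem strongConvexOn_univ_norm_sub_sq_div (p : X) (σ : ℝ) :
    StrongConvexOn univ σ⁻¹ fun x => ‖x - p‖ ^ 2 / (2 * σ) := by
  refine strongConvexOn_iff_convex.2 ?_
  have haffine : (fun x : X => ‖x - p‖ ^ 2 / (2 * σ) - σ⁻¹ / 2 * ‖x‖ ^ 2) =
      fun x => (-σ⁻¹) * ⟪p, x⟫ + ‖p‖ ^ 2 / (2 * σ) := by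
    ext x
    rw [norm_sub_sq_real, real_inner_comm]
    ring
  rw [haffine]
  exact ((-σ⁻¹ • innerₛₗ ℝ p).convexOn convex_univ).add_const (‖p‖ ^ 2 / (2 * σ))

theorem StrongConvexOn.add_sq_le_of_forall_le {h : X → ℝ} {m : ℝ}
    (hh : StrongConvexOn univ m h) {x₀ : X} (hmin : ∀ z, h x₀ ≤ h z) (z : X) :
    h x₀ + m / 2 * ‖z - x₀‖ ^ 2 ≤ h z := by
  have hseg : ∀ s ∈ Ioo (0 : ℝ) 1, h x₀ + (1 - s) * (m / 2 * ‖z - x₀‖ ^ 2) ≤ h z := by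
    rintro s ⟨hs0, hs1⟩
    have hconv := hh.2 (mem_univ z) (mem_univ x₀) hs0.le (by linarith) (add_sub_cancel s 1)
    have hmin' := hmin (s • z + (1 - s) • x₀)
    simp only [smul_eq_mul] at hconv
    refine le_of_mul_le_mul_left ?_ hs0
    linarith
  have hlim : Tendsto (fun s : ℝ => h x₀ + (1 - s) * (m / 2 * ‖z - x₀‖ ^ 2)) (𝓝[>] 0)
      (𝓝 (h x₀ + m / 2 * ‖z - x₀‖ ^ 2)) := by
    have : Continuous fun s : ℝ => h x₀ + (1 - s) * (m / 2 * ‖z - x₀‖ ^ 2) := by fun_prop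
    simpa using (this.tendsto 0).mono_left nhdsWithin_le_nhds
  exact le_of_tendsto hlim (eventually_of_mem (Ioo_mem_nhdsGT one_pos) hseg)

theorem StrongConvexOn.prox_three_point {φ : X → ℝ} {μ σ : ℝ} (hφ : StrongConvexOn univ μ φ)
    {p m : X} (hm : ∀ z, φ m + ‖m - p‖ ^ 2 / (2 * σ) ≤ φ z + ‖z - p‖ ^ 2 / (2 * σ)) (z : X) :
    φ m + ‖m - p‖ ^ 2 / (2 * σ) + (μ + σ⁻¹) / 2 * ‖z - m‖ ^ 2 ≤
      φ z + ‖z - p‖ ^ 2 / (2 * σ) := by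
  have hsc : StrongConvexOn univ (μ + σ⁻¹) fun x => φ x + ‖x - p‖ ^ 2 / (2 * σ) :=
    (hφ.add (strongConvexOn_univ_norm_sub_sq_div p σ)).mono fun r =>
      le_of_eq (by simp only [Pi.add_apply]; ring)
  exact hsc.add_sq_le_of_forall_le hm z

end Prox

section PrimalDual

variable {E F : Type*} [NormedAddCommGroup E] [InnerProductSpace ℝ E]
  [NormedAddCommGroup F] [InnerProductSpace ℝ F]

def lagrangian (f : E → ℝ) (g : F → ℝ) (A : E →L[ℝ] F) (u : E) (v : F) : ℝ :=
  f u + ⟪A u, v⟫ - g v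

section Lagrangian

variable {f : E → ℝ} {g : F → ℝ} (A : E →L[ℝ] F)

theorem convexOn_lagrangian_left {s : Set E} (hf : ConvexOn ℝ s f) (v : F) :
    ConvexOn ℝ s fun u => lagrangian f g A u v := by
  refine ⟨hf.1, fun x hx y hy a b ha hb hab => ?_⟩
  have hfx := hf.2 hx hy ha hb hab
  simp only [lagrangian, map_add, map_smul, inner_add_left, real_inner_smul_left, smul_eq_mul]
    at hfx ⊢
  linear_combination hfx + g v * hab

theorem concaveOn_lagrangian_right {s : Set F} (hg : ConvexOn ℝ s g) (u : E) :
    ConcaveOn ℝ s (lagrangian f g A u) := by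
  refine ⟨hg.1, fun x hx y hy a b ha hb hab => ?_⟩
  have hgx := hg.2 hx hy ha hb hab
  simp only [lagrangian, inner_add_right, real_inner_smul_right, smul_eq_mul] at hgx ⊢
  linear_combination hgx + f u * hab

theorem lagrangian_centerMass_sub_le {ι : Type*} (hf : ConvexOn ℝ univ f)
    (hg : ConvexOn ℝ univ g) {s : Finset ι} {w : ι → ℝ} (hw₀ : ∀ i ∈ s, 0 ≤ w i)
    (hw : 0 < ∑ i ∈ s, w i) (x : ι → E) (y : ι → F) (u : E) (v : F) :
    lagrangian f g A ((∑ i ∈ s, w i)⁻¹ • ∑ i ∈ s, w i • x i) v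
        - lagrangian f g A u ((∑ i ∈ s, w i)⁻¹ • ∑ i ∈ s, w i • y i) ≤
      (∑ i ∈ s, w i)⁻¹ * ∑ i ∈ s, w i * (lagrangian f g A (x i) v - lagrangian f g A u (y i)) := by
  have hx := (convexOn_lagrangian_left (g := g) A hf v).map_centerMass_le hw₀ hw
    fun i _ => mem_univ (x i)
  have hy := (concaveOn_lagrangian_right (f := f) A hg u).le_map_centerMass hw₀ hw
    fun i _ => mem_univ (y i)
  simp only [Finset.centerMass, smul_eq_mul, Function.comp_apply] at hx hy
  simp only [mul_sub, Finset.sum_sub_distrib]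
  exact sub_le_sub hx hy

end Lagrangian

theorem ContinuousLinearMap.mul_inner_apply_le (A : E →L[ℝ] F) (u : E) (w : F) (s : ℝ) {τ : ℝ}
    (hτ : 0 < τ) :
    s * ⟪A u, w⟫ ≤ τ * ‖A‖ ^ 2 / 2 * ‖u‖ ^ 2 + s ^ 2 / (2 * τ) * ‖w‖ ^ 2 := by
  calc s * ⟪A u, w⟫ = ⟪A u, s • w⟫ := (real_inner_smul_right _ _ _).symm
    _ ≤ ‖A u‖ * ‖s • w‖ := real_inner_le_norm _ _
    _ ≤ (‖A‖ * ‖u‖) * (|s| * ‖w‖) := by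
      rw [norm_smul, Real.norm_eq_abs]
      gcongr
      exact A.le_opNorm u
    _ ≤ τ * ‖A‖ ^ 2 / 2 * ‖u‖ ^ 2 + s ^ 2 / (2 * τ) * ‖w‖ ^ 2 := by
      rw [← mul_le_mul_iff_of_pos_left (by positivity : 0 < 2 * τ)]
      field_simp
      nlinarith [sq_nonneg (τ * (‖A‖ * ‖u‖) - |s| * ‖w‖), sq_abs s]

theorem lagrangian_sub_le_of_primalDual_step {f : E → ℝ} {g : F → ℝ} {A : E →L[ℝ] F}
    {μ η σ : ℝ} (hf : ConvexOn ℝ univ f) (hg : StrongConvexOn univ μ g) (hσ : σ ≠ 0)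
    {x x' : E} {y y' ŷ : F}
    (hx : ∀ z, f x' + ⟪A x', ŷ⟫ + ‖x' - x‖ ^ 2 / (2 * η) ≤
      f z + ⟪A z, ŷ⟫ + ‖z - x‖ ^ 2 / (2 * η))
    (hy : ∀ z, ‖y' - (y + σ • A x')‖ ^ 2 / (2 * σ) + g y' ≤
      ‖z - (y + σ • A x')‖ ^ 2 / (2 * σ) + g z)
    (u : E) (v : F) :
    lagrangian f g A x' v - lagrangian f g A u y' ≤
      ⟪A x' - A u, y' - ŷ⟫ + (‖u - x‖ ^ 2 - ‖u - x'‖ ^ 2 - ‖x' - x‖ ^ 2) / (2 * η)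
        + (‖v - y‖ ^ 2 - ‖y' - y‖ ^ 2) / (2 * σ) - (μ + σ⁻¹) / 2 * ‖v - y'‖ ^ 2 := by
  have hxL : ∀ z, lagrangian f g A x' ŷ + ‖x' - x‖ ^ 2 / (2 * η) ≤
      lagrangian f g A z ŷ + ‖z - x‖ ^ 2 / (2 * η) := fun z => by
    simp only [lagrangian]; linarith [hx z]
  have hx3 := (strongConvexOn_zero.2 (convexOn_lagrangian_left A hf ŷ)).prox_three_point hxL u
  have hy3 := hg.prox_three_point
    (fun z => (add_comm _ _).trans_le ((hy z).trans_eq (add_comm _ _))) v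
  have hexpand : ∀ z, ‖z - (y + σ • A x')‖ ^ 2 / (2 * σ) =
      ‖z - y‖ ^ 2 / (2 * σ) - ⟪A x', z - y⟫ + σ / 2 * ‖A x'‖ ^ 2 := fun z => by
    rw [← sub_sub, norm_sub_sq_real, norm_smul, inner_smul_right, real_inner_comm,
      Real.norm_eq_abs, mul_pow, sq_abs]
    field_simp
  have hprimal : (0 + η⁻¹) / 2 * ‖u - x'‖ ^ 2 = ‖u - x'‖ ^ 2 / (2 * η) := by ring
  rw [hprimal] at hx3
  rw [hexpand, hexpand] at hy3
  simp only [lagrangian, inner_sub_left, inner_sub_right, sub_div] at hx3 hy3 ⊢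
  linarith

/-- The Lyapunov function of EDPD; `y (t - 1)` is only read for `1 ≤ t`. -/
noncomputable def edpdPotential (A : E →L[ℝ] F) (τ : ℝ) (x : ℕ → E) (y : ℕ → F) (u : E) (v : F)
    (t : ℕ) : ℝ :=
  τ * ‖A‖ ^ 2 / 2 * ‖u - x t‖ ^ 2 + ((t : ℝ) + 1) ^ 2 / (2 * τ) * ‖v - y t‖ ^ 2
    + (t : ℝ) ^ 2 / (2 * τ) * ‖y t - y (t - 1)‖ ^ 2 - t * ⟪A (x t) - A u, y t - y (t - 1)⟫

section Potential

variable (A : E →L[ℝ] F) {τ : ℝ} (x : ℕ → E) (y : ℕ → F) (u : E) (v : F)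

theorem edpdPotential_nonneg (hτ : 0 < τ) (t : ℕ) : 0 ≤ edpdPotential A τ x y u v t := by
  have hyoung := A.mul_inner_apply_le (x t - u) (y t - y (t - 1)) t hτ
  rw [map_sub, norm_sub_rev] at hyoung
  have : 0 ≤ ((t : ℝ) + 1) ^ 2 / (2 * τ) * ‖v - y t‖ ^ 2 := by positivity
  unfold edpdPotential
  linarith

theorem edpdPotential_one (hy : y 0 = y 1) :
    edpdPotential A τ x y u v 1 = τ * ‖A‖ ^ 2 / 2 * ‖u - x 1‖ ^ 2 + 2 / τ * ‖v - y 1‖ ^ 2 := by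
  simp only [edpdPotential, Nat.sub_self, hy, sub_self, norm_zero, inner_zero_right]
  ring

end Potential

theorem mul_lagrangian_sub_le_edpdPotential_sub {f : E → ℝ} {g : F → ℝ} {A : E →L[ℝ] F}
    {μ τ η σ α : ℝ}
    (hf : ConvexOn ℝ univ f) (hg : StrongConvexOn univ μ g) (hτ : 0 < τ) (hμτ : 5 / 2 ≤ μ * τ)
    {x : ℕ → E} {y : ℕ → F} {ŷ : F} {t : ℕ} (ht : 1 ≤ t)
    (hη : η = ((t : ℝ) + 1) / (τ * ‖A‖ ^ 2)) (hσ : σ = τ / ((t : ℝ) + 1))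
    (hα : α = (t : ℝ) / ((t : ℝ) + 1)) (hŷ : ŷ = α • (y t - y (t - 1)) + y t)
    (hx : ∀ z, f (x (t + 1)) + ⟪A (x (t + 1)), ŷ⟫ + ‖x (t + 1) - x t‖ ^ 2 / (2 * η) ≤
      f z + ⟪A z, ŷ⟫ + ‖z - x t‖ ^ 2 / (2 * η))
    (hy : ∀ z, ‖y (t + 1) - (y t + σ • A (x (t + 1)))‖ ^ 2 / (2 * σ) + g (y (t + 1)) ≤
      ‖z - (y t + σ • A (x (t + 1)))‖ ^ 2 / (2 * σ) + g z)
    (u : E) (v : F) :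
    ((t : ℝ) + 1) * (lagrangian f g A (x (t + 1)) v - lagrangian f g A u (y (t + 1))) ≤
      edpdPotential A τ x y u v t - edpdPotential A τ x y u v (t + 1) := by
  have ht0 : (0 : ℝ) < t + 1 := by positivity
  have ht1 : (1 : ℝ) ≤ t := by exact_mod_cast ht
  have hσ0 : σ ≠ 0 := by rw [hσ]; positivity
  have hstep := lagrangian_sub_le_of_primalDual_step hf hg hσ0 hx hy u v
  have hcross : ⟪A (x (t + 1)) - A u, y (t + 1) - ŷ⟫ =
      ⟪A (x (t + 1)) - A u, y (t + 1) - y t⟫ - α * (⟪A (x t) - A u, y t - y (t - 1)⟫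
        + ⟪A (x (t + 1) - x t), y t - y (t - 1)⟫) := by
    rw [hŷ, map_sub]
    simp only [inner_sub_left, inner_sub_right, inner_add_right, real_inner_smul_right]
    ring
  have hyoung := A.mul_inner_apply_le (x (t + 1) - x t) (y t - y (t - 1)) (-t) hτ
  have hηw : ((t : ℝ) + 1) / (2 * η) = τ * ‖A‖ ^ 2 / 2 := by
    rw [hη, mul_div_assoc', div_div_eq_mul_div]
    field_simp
  have hσw : ((t : ℝ) + 1) / (2 * σ) = ((t : ℝ) + 1) ^ 2 / (2 * τ) := by
    rw [hσ]; field_simp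
  have hαw : ((t : ℝ) + 1) * α = t := by rw [hα]; field_simp
  -- `(t + 2)² ≤ (t + 1)² + μ τ (t + 1)`, as `2 t + 3 ≤ 5 (t + 1) / 2` once `1 ≤ t`
  have hμw : ((t : ℝ) + 1 + 1) ^ 2 / (2 * τ) ≤ ((t : ℝ) + 1) * ((μ + σ⁻¹) / 2) := by
    rw [hσ, inv_div, div_le_iff₀ (by positivity)]
    field_simp
    nlinarith
  have hdual := mul_le_mul_of_nonneg_right hμw (sq_nonneg ‖v - y (t + 1)‖)
  have hweighted := mul_le_mul_of_nonneg_left hstep ht0.le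
  rw [hcross] at hweighted
  simp only [edpdPotential, Nat.add_sub_cancel]
  push_cast
  linear_combination hweighted + hyoung + hdual
    + (‖u - x t‖ ^ 2 - ‖u - x (t + 1)‖ ^ 2 - ‖x (t + 1) - x t‖ ^ 2) * hηw
    + (‖v - y t‖ ^ 2 - ‖y (t + 1) - y t‖ ^ 2) * hσw
    - (⟪A (x t) - A u, y t - y (t - 1)⟫ + ⟪A (x (t + 1) - x t), y t - y (t - 1)⟫) * hαw

end PrimalDual

theorem sum_Icc_natCast_add_one (k : ℕ) :
    ∑ t ∈ Finset.Icc 1 k, ((t : ℝ) + 1) = k * (k + 3) / 2 := by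
  induction k with
  | zero => simp
  | succ k ih =>
    rw [Finset.sum_Icc_succ_top (Nat.le_add_left 1 k), ih]
    push_cast
    ring

theorem stmt18 {E F : Type*} [NormedAddCommGroup E] [InnerProductSpace ℝ E]
    [NormedAddCommGroup F] [InnerProductSpace ℝ F]
    (f : E → ℝ) (g : F → ℝ) (A : E →L[ℝ] F)
    (μg τ : ℝ) (hμg : 0 < μg) (hτ : τ = 2.5 / μg)
    (hf : ConvexOn ℝ Set.univ f)
    (hg : StrongConvexOn Set.univ μg g)
    (τt η α : ℕ → ℝ)
    (hτt : ∀ t, τt t = τ / ((t : ℝ) + 1))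
    (hη : ∀ t, η t = ((t : ℝ) + 1) / (τ * ‖A‖ ^ 2))
    (hα : ∀ t, α t = (t : ℝ) / ((t : ℝ) + 1))
    (x : ℕ → E) (y yh : ℕ → F)
    (hy0 : y 0 = y 1)
    (hyh : ∀ t ≥ 1, yh t = α t • (y t - y (t - 1)) + y t)
    (hx : ∀ t ≥ 1, ∀ z,
      f (x (t + 1)) + ⟪A (x (t + 1)), yh t⟫ + ‖x (t + 1) - x t‖ ^ 2 / (2 * η t) ≤
      f z + ⟪A z, yh t⟫ + ‖z - x t‖ ^ 2 / (2 * η t))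
    (hy : ∀ t ≥ 1, ∀ z,
      ‖y (t + 1) - (y t + τt t • A (x (t + 1)))‖ ^ 2 / (2 * τt t) + g (y (t + 1)) ≤
      ‖z - (y t + τt t • A (x (t + 1)))‖ ^ 2 / (2 * τt t) + g z)
    (L : E → F → ℝ) (hL : ∀ u v, L u v = f u + ⟪A u, v⟫ - g v) :
    ∀ k : ℕ, 1 ≤ k → ∀ (xx : E) (yy : F),
      L ((∑ t ∈ Finset.Icc 1 k, ((t : ℝ) + 1))⁻¹ •
            ∑ t ∈ Finset.Icc 1 k, ((t : ℝ) + 1) • x (t + 1)) yy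
        - L xx ((∑ t ∈ Finset.Icc 1 k, ((t : ℝ) + 1))⁻¹ •
            ∑ t ∈ Finset.Icc 1 k, ((t : ℝ) + 1) • y (t + 1)) ≤
        2 / ((k : ℝ) * (k + 3)) *
          (‖A‖ ^ 2 * τ * ‖xx - x 1‖ ^ 2 / 2 + 2 * ‖yy - y 1‖ ^ 2 / τ) := by
  intro k hk u v
  obtain rfl : L = lagrangian f g A := funext fun u => funext (hL u)
  have hτ0 : 0 < τ := by rw [hτ]; positivity
  have hμτ : 5 / 2 ≤ μg * τ := by rw [hτ]; field_simp; norm_num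
  have hW : 0 < ∑ t ∈ Finset.Icc 1 k, ((t : ℝ) + 1) := by
    rw [sum_Icc_natCast_add_one]; positivity
  set Φ := edpdPotential A τ x y u v
  have hsum : ∑ t ∈ Finset.Icc 1 k, ((t : ℝ) + 1) *
      (lagrangian f g A (x (t + 1)) v - lagrangian f g A u (y (t + 1))) ≤ Φ 1 - Φ (k + 1) := by
    calc _ ≤ ∑ t ∈ Finset.Icc 1 k, (Φ t - Φ (t + 1)) := Finset.sum_le_sum fun t ht => by
          have ht1 := (Finset.mem_Icc.1 ht).1
          exact mul_lagrangian_sub_le_edpdPotential_sub hf hg hτ0 hμτ ht1 (hη t) (hτt t) (hα t)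
            (hyh t ht1) (hx t ht1) (hy t ht1) u v
      _ = Φ 1 - Φ (k + 1) := by
        simpa only [neg_sub_neg] using Finset.sum_Icc_sub hk fun t => -Φ t
  calc _ ≤ _ := lagrangian_centerMass_sub_le A hf (hg.convexOn fun r => by positivity)
          (fun t _ => by positivity) hW (fun t => x (t + 1)) (fun t => y (t + 1)) u v
    _ ≤ (∑ t ∈ Finset.Icc 1 k, ((t : ℝ) + 1))⁻¹ * Φ 1 := by
      gcongr
      linarith [edpdPotential_nonneg A x y u v hτ0 (k + 1)]
    _ = _ := by
      rw [show Φ 1 = _ from edpdPotential_one A x y u v hy0, sum_Icc_natCast_add_one]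
      field_simp
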